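/- arXiv:2605.08304 — 6 statements merged into one kernel-verified Lean document; each statement's English description precedes it below -/
import Mathlib

section
/- The exponential generating function of the r-derangement numbers is sum_{k=0}^∞ d_{k,r} t^k / k! = t^r e^{-t} / (1-t)^{r+1}, as an identity of formal power series over ℚ. -/
/-!
Write `d(n, r)` for the number of derangements of `Fin n` whose first `r` points lie in pairwise
distinct cycles. The image `a = σ m` of a marked point `m` is unmarked, and by symmetry each of the
`n - r` possible values of `a` is taken equally often. Deleting `a` from its cycle leaves a
permutation of the other `n - 1` points, with the marked points still in distinct cycles, in which
only `m` may be fixed. If `m` is not fixed it is counted by `d(n - 1, r)`; if it is, `(m a)` was a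
2-cycle of `σ`, and deleting `m` as well leaves a permutation counted by `d(n - 2, r - 1)`. Hence
`d_{k+1,r+1} = (k+1) (d_{k,r+1} + d_{k,r})`, with `d_{0,r+1} = 0` and `d_{k,0} = D_k`. For the
exponential generating functions `F_r` this says `(1 - t) F_{r+1} = t F_r`, while the derangement
recurrence gives `(1 - t) F_0 = e^{-t}`; so `F_r (1 - t)^{r+1} = t^r e^{-t}`.
-/

/-- `rDerangements r k` is the number of permutations of `[k+r]` with no fixed
point in which the first `r` elements lie in pairwise distinct cycles. -/
noncomputable def rDerangements (r k : ℕ) : ℕ :=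
  Nat.card {σ : Equiv.Perm (Fin (k + r)) //
    (∀ i, σ i ≠ i) ∧
      ∀ i j : Fin (k + r), (i : ℕ) < r → (j : ℕ) < r → i ≠ j → ¬ σ.SameCycle i j}

namespace Equiv.Perm

open Function

variable {α β : Type*}

def Separates (σ : Perm α) (s : Set α) : Prop :=
  s.Pairwise fun x y => ¬ σ.SameCycle x y

def markedDerangements (s : Set α) : Set (Perm α) :=
  {σ | σ ∈ derangements α ∧ σ.Separates s}

def markedFiber (s : Set α) (m a : α) : Set (Perm α) :=
  {σ | σ m = a ∧ σ ∈ markedDerangements s}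

theorem apply_notMem_of_mem_markedDerangements {s : Set α} {σ : Perm α}
    (hσ : σ ∈ markedDerangements s) {m : α} (hm : m ∈ s) : σ m ∉ s := fun h =>
  hσ.2 hm h (hσ.1 m).symm ⟨1, by simp⟩

theorem mem_derangements_iff_fixedPoints_subset {σ : Perm α} (a : α) :
    σ ∈ derangements α ↔ fixedPoints σ ⊆ {a} ∧ σ a ≠ a := by
  refine ⟨fun h => ⟨fun x hx => absurd hx (h x), h a⟩, fun ⟨hfix, ha⟩ x hx => ?_⟩
  exact ha ((hfix hx : x = a) ▸ hx)

theorem sameCycle_permCongr_apply (e : α ≃ β) (σ : Perm α) {x y : α} :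
    (e.permCongr σ).SameCycle (e x) (e y) ↔ σ.SameCycle x y := by
  have hpow (n : ℤ) : e.permCongr σ ^ n = e.permCongr (σ ^ n) := by
    rw [← permCongrHom_coe, map_zpow]
  simp [SameCycle, hpow, permCongr_apply]

theorem separates_permCongr_iff (e : α ≃ β) {σ : Perm α} {t : Set β} :
    (e.permCongr σ).Separates t ↔ σ.Separates (e ⁻¹' t) := by
  rw [Separates, Separates]
  conv_lhs => rw [← e.image_preimage t, e.injective.injOn.pairwise_image]
  simp_rw [← sameCycle_permCongr_apply e σ]

theorem permCongr_mem_markedDerangements_iff (e : α ≃ β) {σ : Perm α} {t : Set β} :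
    e.permCongr σ ∈ markedDerangements t ↔ σ ∈ markedDerangements (e ⁻¹' t) := by
  have hfix : (∀ x, σ x ≠ x) ↔ ∀ y, e.permCongr σ y ≠ y :=
    e.forall_congr fun {x} => by simp [permCongr_apply]
  exact (and_congr hfix (separates_permCongr_iff e).symm).symm

theorem card_markedDerangements_congr (e : α ≃ β) {s : Set α} {t : Set β} (h : s = e ⁻¹' t) :
    Nat.card (markedDerangements s) = Nat.card (markedDerangements t) :=
  Nat.card_congr <| e.permCongr.subtypeEquiv fun σ => by
    rw [h, permCongr_mem_markedDerangements_iff]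

theorem card_markedFiber_congr (e : α ≃ β) {s : Set α} {t : Set β} (h : s = e ⁻¹' t)
    (m a : α) : Nat.card (markedFiber s m a) = Nat.card (markedFiber t (e m) (e a)) :=
  Nat.card_congr <| e.permCongr.subtypeEquiv fun σ => by
    simp [markedFiber, h, permCongr_mem_markedDerangements_iff, permCongr_apply]

def markedDerangementsEquivSigmaFiber {s : Set α} {m : α} (hm : m ∈ s) :
    markedDerangements s ≃ Σ a : ↥sᶜ, markedFiber s m a where
  toFun σ := ⟨⟨σ.1 m, apply_notMem_of_mem_markedDerangements σ.2 hm⟩, σ.1, rfl, σ.2⟩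
  invFun p := ⟨p.2.1, p.2.2.2⟩
  left_inv _ := rfl
  right_inv p := Sigma.subtype_ext (Subtype.ext p.2.2.1) rfl

/-- Conjugating by the transposition of two unmarked points identifies their fibers. -/
theorem card_markedDerangements_eq_mul [Finite α] [DecidableEq α] {s : Set α} {m a : α}
    (hm : m ∈ s) (ha : a ∉ s) :
    Nat.card (markedDerangements s) = Nat.card ↥sᶜ * Nat.card (markedFiber s m a) := by
  have hfiber (b : ↥sᶜ) : Nat.card (markedFiber s m b) = Nat.card (markedFiber s m a) := by
    obtain ⟨b, hb : b ∉ s⟩ := b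
    have hbm : m ≠ b := fun h => hb (h ▸ hm)
    have ham : m ≠ a := fun h => ha (h ▸ hm)
    have hs : s = swap b a ⁻¹' s := by
      ext x
      rcases eq_or_ne x b with rfl | hxb
      · simp [ha, hb]
      rcases eq_or_ne x a with rfl | hxa
      · simp [ha, hb]
      simp [swap_apply_of_ne_of_ne hxb hxa]
    rw [card_markedFiber_congr _ hs, swap_apply_of_ne_of_ne hbm ham, swap_apply_left]
  have := Fintype.ofFinite ↥sᶜ
  rw [Nat.card_congr (markedDerangementsEquivSigmaFiber hm), Nat.card_sigma]
  simp [hfiber, Nat.card_eq_fintype_card]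

section Option

theorem some_removeNone_apply {σ : Perm (Option α)} {x : α} (h : σ (some x) ≠ none) :
    some (removeNone σ x) = σ (some x) :=
  removeNone_some σ (Option.ne_none_iff_exists'.1 h)

theorem sameCycle_some_removeNone (σ : Perm (Option α)) (x : α) :
    σ.SameCycle (some x) (some (removeNone σ x)) := by
  rcases h : σ (some x) with _ | y
  · rw [removeNone_none σ h, ← h]
    exact sameCycle_apply_right.2 (sameCycle_apply_right.2 SameCycle.rfl)
  · rw [removeNone_some σ ⟨y, h⟩]
    exact sameCycle_apply_right.2 SameCycle.rfl

theorem SameCycle.some_of_removeNone {σ : Perm (Option α)} {x y : α}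
    (h : SameCycle (removeNone σ) x y) : σ.SameCycle (some x) (some y) := by
  obtain ⟨n, rfl⟩ := h
  induction n using Int.induction_on with
  | zero => exact SameCycle.rfl
  | succ n ih =>
    rw [add_comm, zpow_add, zpow_one, mul_apply]
    exact ih.trans (sameCycle_some_removeNone σ _)
  | pred n ih =>
    rw [sub_eq_neg_add, zpow_add, zpow_neg_one, mul_apply]
    have h := sameCycle_some_removeNone σ ((removeNone σ)⁻¹ ((removeNone σ ^ (-n : ℤ)) x))
    rw [Perm.coe_inv, apply_symm_apply] at h
    exact ih.trans h.symm

/-- The orbit of `some x` under `σ` stays in the `removeNone σ`-cycle of `x`, where a visit to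
`none` stands for the point `b` with `σ (some b) = none`. -/
theorem sameCycle_removeNone_of_pow_apply_some {σ : Perm (Option α)} {x y : α} {n : ℕ}
    (h : (σ ^ n) (some x) = some y) : SameCycle (removeNone σ) x y := by
  let P : Option α → Prop := fun o => o.elim
    (∀ b, σ (some b) = none → SameCycle (removeNone σ) x b) (SameCycle (removeNone σ) x)
  have hstep (o : Option α) (ho : P o) : P (σ o) := by
    rcases o with _ | z
    · rcases hn : σ none with _ | w
      · exact ho
      obtain ⟨b, hb⟩ : ∃ b, σ (some b) = none := by
        rcases hb : σ.symm none with _ | b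
        · simp [hn] at hb
        · exact ⟨b, by simp [← hb]⟩
      have hw : removeNone σ b = w := Option.some.inj ((removeNone_none σ hb).trans hn)
      exact hw ▸ sameCycle_apply_right.2 (ho b hb)
    · rcases hz : σ (some z) with _ | w
      · intro b hb
        rwa [Option.some.inj (σ.injective (hb.trans hz.symm))]
      · have hw : removeNone σ z = w := Option.some.inj ((removeNone_some σ ⟨w, hz⟩).trans hz)
        exact hw ▸ sameCycle_apply_right.2 ho
  have hP (k : ℕ) : P ((σ ^ k) (some x)) := by
    induction k with
    | zero => exact SameCycle.refl _ x
    | succ k ih => rw [pow_succ', mul_apply]; exact hstep _ ih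
  simpa [h, P] using hP n

theorem sameCycle_removeNone_iff [Finite α] {σ : Perm (Option α)} {x y : α} :
    SameCycle (removeNone σ) x y ↔ σ.SameCycle (some x) (some y) := by
  refine ⟨SameCycle.some_of_removeNone, fun h => ?_⟩
  obtain ⟨n, -, -, hn⟩ := h.exists_pow_eq''
  exact sameCycle_removeNone_of_pow_apply_some hn

theorem separates_image_some_iff [Finite α] (σ : Perm (Option α)) (s : Set α) :
    σ.Separates (some '' s) ↔ Separates (removeNone σ) s := by
  rw [Separates, (Option.some_injective α).injOn.pairwise_image]
  simp_rw [Separates, sameCycle_removeNone_iff]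

theorem separates_insert_of_isFixedPt {σ : Perm α} {a : α} (ha : IsFixedPt σ a) (s : Set α) :
    σ.Separates (insert a s) ↔ σ.Separates s := by
  have hsep {y : α} (hy : a ≠ y) : ¬ σ.SameCycle a y := fun hc => hy (hc.eq_of_left ha)
  rw [Separates, Set.pairwise_insert]
  exact and_iff_left fun y _ hy => ⟨hsep hy, fun hc => hsep hy hc.symm⟩

theorem mem_derangements_iff_fixedPoints_removeNone_subset {σ : Perm (Option α)} {b : α}
    (hb : σ (some b) = none) : σ ∈ derangements _ ↔ fixedPoints (removeNone σ) ⊆ {b} := by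
  have hsome {x : α} (hx : x ≠ b) : some (removeNone σ x) = σ (some x) :=
    some_removeNone_apply fun h => hx (Option.some.inj (σ.injective (h.trans hb.symm)))
  constructor
  · intro hσ x (hx : removeNone σ x = x)
    by_contra hxb
    exact hσ (some x) (by rw [← hsome hxb, hx])
  · rintro h (_ | x) hx
    · exact Option.some_ne_none b (σ.injective (hb.trans hx.symm))
    · rcases eq_or_ne x b with rfl | hxb
      · exact Option.some_ne_none x (hx.symm.trans hb)
      · exact hxb (h (Option.some.inj ((hsome hxb).trans hx)))

theorem fixedPoints_subset_none_iff {σ : Perm (Option α)} (h : σ none = none) :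
    fixedPoints σ ⊆ {none} ↔ removeNone σ ∈ derangements α := by
  have hsome (x : α) : some (removeNone σ x) = σ (some x) :=
    some_removeNone_apply fun hx => Option.some_ne_none x (σ.injective (hx.trans h.symm))
  constructor
  · intro hσ x hx
    have : some x ∈ fixedPoints σ := by rw [mem_fixedPoints, IsFixedPt, ← hsome, hx]
    exact Option.some_ne_none x (hσ this)
  · rintro hσ (_ | x) hx
    · rfl
    · exact absurd (Option.some.inj ((hsome x).trans hx)) (hσ x)

variable [DecidableEq α]

/-- Deleting `none` from its cycle, where it sits right after `some b`. -/
def removeNoneEquiv (b : α) : {σ : Perm (Option α) // σ (some b) = none} ≃ Perm α where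
  toFun σ := removeNone σ.1
  invFun τ := ⟨decomposeOption.symm (some (τ b), τ), by
    rw [decomposeOption_symm_apply, Perm.mul_apply, optionCongr_apply, Option.map_some,
      swap_apply_right]⟩
  left_inv σ := Subtype.ext <| by
    show decomposeOption.symm (some (removeNone σ.1 b), removeNone σ.1) = σ.1
    rw [removeNone_none σ.1 σ.2]
    exact decomposeOption.symm_apply_apply σ.1
  right_inv τ := congrArg Prod.snd (decomposeOption.apply_symm_apply (some (τ b), τ))

def fixNoneEquiv : {σ : Perm (Option α) // σ none = none} ≃ Perm α where
  toFun σ := removeNone σ.1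
  invFun τ := ⟨decomposeOption.symm (none, τ), by simp⟩
  left_inv σ := Subtype.ext <| by
    have h := decomposeOption.symm_apply_apply σ.1
    rwa [decomposeOption_apply, σ.2] at h
  right_inv τ := congrArg Prod.snd (decomposeOption.apply_symm_apply (none, τ))

theorem card_markedFiber_some_none [Finite α] (s : Set α) (b : α) :
    Nat.card (markedFiber (some '' s) (some b) none) =
      Nat.card {τ : Perm α // fixedPoints τ ⊆ {b} ∧ τ.Separates s} :=
  Nat.card_congr <| (subtypeSubtypeEquivSubtypeInter _ _).symm.trans <|
    (removeNoneEquiv b).subtypeEquiv fun σ =>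
      and_congr (mem_derangements_iff_fixedPoints_removeNone_subset σ.2)
        (separates_image_some_iff σ.1 s)

theorem card_fixedPoints_subset_none [Finite α] (s : Set α) :
    Nat.card {σ : Perm (Option α) // fixedPoints σ ⊆ {none} ∧
        σ.Separates (insert none (some '' s))} =
      Nat.card (markedDerangements (insert none (some '' s))) + Nat.card (markedDerangements s) := by
  set t : Set (Option α) := insert none (some '' s)
  let P (σ : Perm (Option α)) : Prop := fixedPoints σ ⊆ {none} ∧ σ.Separates t
  have moves : {σ : Subtype P // σ.1 none ≠ none} ≃ markedDerangements t :=
    (subtypeSubtypeEquivSubtypeInter P fun σ => σ none ≠ none).trans <|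
      subtypeEquivRight fun σ => by
        show _ ↔ σ ∈ derangements _ ∧ σ.Separates t
        rw [mem_derangements_iff_fixedPoints_subset none]
        tauto
  have fixes : {σ : Subtype P // ¬ σ.1 none ≠ none} ≃ markedDerangements s :=
    (subtypeSubtypeEquivSubtypeInter P fun σ => ¬ σ none ≠ none).trans <|
      (subtypeEquivRight fun σ => and_comm.trans (and_congr_left' not_not)).trans <|
        (subtypeSubtypeEquivSubtypeInter (fun σ => σ none = none) P).symm.trans <|
          fixNoneEquiv.subtypeEquiv fun σ =>
            and_congr (fixedPoints_subset_none_iff σ.2)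
              ((separates_insert_of_isFixedPt σ.2 _).trans (separates_image_some_iff σ.1 s))
  rw [← Nat.card_sum]
  exact Nat.card_congr ((Equiv.sumCompl _).symm.trans (moves.sumCongr fixes))

end Option

end Equiv.Perm

section Fin

open Equiv Equiv.Perm

noncomputable def numMarkedDerangements (n r : ℕ) : ℕ :=
  Nat.card (markedDerangements {i : Fin n | (i : ℕ) < r})

theorem rDerangements_eq_numMarkedDerangements (r k : ℕ) :
    rDerangements r k = numMarkedDerangements (k + r) r :=
  Nat.card_congr <| subtypeEquivRight fun _ =>
    and_congr Iff.rfl ⟨fun h _ hi _ hj => h _ _ hi hj, fun h _ _ hi hj => h hi hj⟩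

theorem card_compl_setOf_val_lt (n r : ℕ) : Nat.card ↥{i : Fin n | (i : ℕ) < r}ᶜ = n - r := by
  have h := Finset.card_filter_add_card_filter_not (s := Finset.univ) fun i : Fin n => (i : ℕ) < r
  simp only [Fin.card_filter_val_lt, Finset.card_univ, Fintype.card_fin, not_lt] at h
  simp only [Set.compl_ofPred, not_lt, Nat.card_eq_fintype_card, Fintype.card_ofFinset,
    Set.mem_ofPred_eq]
  omega

theorem setOf_val_lt_eq_preimage_finSuccEquiv (n r : ℕ) :
    {i : Fin (n + 1) | (i : ℕ) < r + 1} =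
      finSuccEquiv n ⁻¹' insert none (some '' {i : Fin n | (i : ℕ) < r}) := by
  ext i
  induction i using Fin.cases <;> simp

theorem setOf_val_lt_eq_preimage_finSuccEquivLast {n r : ℕ} (hr : r ≤ n) :
    {i : Fin (n + 1) | (i : ℕ) < r} = finSuccEquivLast ⁻¹' (some '' {i : Fin n | (i : ℕ) < r}) := by
  ext i
  induction i using Fin.lastCases <;> simp [hr]

/-- Reduce to the fiber `σ 0 = Fin.last`, then relabel so that `Fin.last` becomes the outer `none`
and the marked point `0` the inner `none` of `Option (Option (Fin n))`. -/
theorem numMarkedDerangements_add_two {n r : ℕ} (hr : r ≤ n) :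
    numMarkedDerangements (n + 2) (r + 1) =
      (n + 1 - r) * (numMarkedDerangements (n + 1) (r + 1) + numMarkedDerangements n r) := by
  let e : Fin (n + 2) ≃ Option (Option (Fin n)) :=
    finSuccEquivLast.trans (optionCongr (finSuccEquiv n))
  have he : {i : Fin (n + 2) | (i : ℕ) < r + 1} =
      e ⁻¹' (some '' insert none (some '' {i : Fin n | (i : ℕ) < r})) := by
    rw [setOf_val_lt_eq_preimage_finSuccEquivLast (by omega),
      setOf_val_lt_eq_preimage_finSuccEquiv, coe_trans, Set.preimage_comp]
    congr 1
    ext (_ | i) <;> simp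
  have he0 : e 0 = some none := by
    show optionCongr (finSuccEquiv n) (finSuccEquivLast (Fin.castSucc 0)) = some none
    rw [finSuccEquivLast_castSucc, optionCongr_apply, Option.map_some, finSuccEquiv_zero]
  have helast : e (Fin.last (n + 1)) = none := by simp [e]
  rw [numMarkedDerangements, card_markedDerangements_eq_mul (m := 0) (a := Fin.last (n + 1))
      (by simp) (show ¬ n + 1 < r + 1 by omega), card_compl_setOf_val_lt, card_markedFiber_congr e he, he0,
    helast, card_markedFiber_some_none, card_fixedPoints_subset_none,
    ← card_markedDerangements_congr _ (setOf_val_lt_eq_preimage_finSuccEquiv n r),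
    show n + 2 - (r + 1) = n + 1 - r by omega]
  rfl

theorem rDerangements_succ_succ (r k : ℕ) :
    rDerangements (r + 1) (k + 1) = (k + 1) * (rDerangements (r + 1) k + rDerangements r k) := by
  simp only [rDerangements_eq_numMarkedDerangements]
  rw [show k + 1 + (r + 1) = k + r + 2 by omega, show k + (r + 1) = k + r + 1 by omega,
    numMarkedDerangements_add_two (by omega), show k + r + 1 - r = k + 1 by omega]

theorem rDerangements_succ_zero (r : ℕ) : rDerangements (r + 1) 0 = 0 := by
  rw [rDerangements_eq_numMarkedDerangements, numMarkedDerangements, Nat.card_eq_zero]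
  refine Or.inl ⟨fun σ => apply_notMem_of_mem_markedDerangements σ.2 (m := 0) (by simp) ?_⟩
  simpa using (σ.1 0).isLt

theorem rDerangements_zero (k : ℕ) : rDerangements 0 k = numDerangements k := by
  rw [rDerangements_eq_numMarkedDerangements, numMarkedDerangements,
    ← card_derangements_fin_eq_numDerangements, ← Nat.card_eq_fintype_card]
  exact Nat.card_congr <| subtypeEquivRight fun σ =>
    and_iff_left fun x hx => absurd hx (Nat.not_lt_zero _)

end Fin

open Nat Finset PowerSeries

noncomputable def rDerangementsEGF (r : ℕ) : ℚ⟦X⟧ :=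
  PowerSeries.mk fun k => (rDerangements r k : ℚ) / (k ! : ℚ)

theorem rDerangementsEGF_zero_mul_one_sub_X :
    rDerangementsEGF 0 * (1 - X) = rescale (-1 : ℚ) (exp ℚ) := by
  ext n
  rw [mul_sub, mul_one, map_sub, coeff_rescale, coeff_exp, rDerangementsEGF, coeff_mk]
  cases n with
  | zero => simp [rDerangements_zero]
  | succ n =>
    rw [mul_comm, coeff_succ_X_mul, coeff_mk, rDerangements_zero, rDerangements_zero]
    have hrec : (numDerangements (n + 1) : ℚ) = (n + 1) * numDerangements n - (-1) ^ n := by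
      exact_mod_cast numDerangements_succ n
    rw [hrec, Nat.factorial_succ]
    simp only [Algebra.algebraMap_self, RingHom.id_apply]
    push_cast
    field_simp
    ring

theorem one_sub_X_mul_rDerangementsEGF_succ (r : ℕ) :
    (1 - X) * rDerangementsEGF (r + 1) = X * rDerangementsEGF r := by
  ext n
  rw [sub_mul, one_mul, map_sub, rDerangementsEGF, rDerangementsEGF]
  cases n with
  | zero => simp [rDerangements_succ_zero]
  | succ n =>
    rw [coeff_succ_X_mul, coeff_succ_X_mul, coeff_mk, coeff_mk, coeff_mk,
      rDerangements_succ_succ, Nat.factorial_succ]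
    push_cast
    field_simp
    ring

theorem rDerangementsEGF_mul_one_sub_X_pow (r : ℕ) :
    rDerangementsEGF r * (1 - X) ^ (r + 1) = X ^ r * rescale (-1 : ℚ) (exp ℚ) := by
  induction r with
  | zero => simpa using rDerangementsEGF_zero_mul_one_sub_X
  | succ r ih =>
    calc rDerangementsEGF (r + 1) * (1 - X) ^ (r + 2)
        = X * (rDerangementsEGF r * (1 - X) ^ (r + 1)) := by
          rw [← mul_assoc, ← one_sub_X_mul_rDerangementsEGF_succ]
          ring
      _ = X ^ (r + 1) * rescale (-1 : ℚ) (exp ℚ) := by rw [ih]; ring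

/-- The exponential generating function of the `r`-derangement numbers:
`∑_{k≥0} d_{k,r} t^k / k! = t^r e^{-t} / (1-t)^{r+1}`, as formal power series over `ℚ`. -/
theorem stmt_1 (r : ℕ) :
    PowerSeries.mk (fun k => (rDerangements r k : ℚ) / (k ! : ℚ)) =
      X ^ r * rescale (-1 : ℚ) (exp ℚ) * ((1 - X) ^ (r + 1))⁻¹ :=
  (PowerSeries.eq_mul_inv_iff_mul_eq (by simp)).2 (rDerangementsEGF_mul_one_sub_X_pow r)
end

section
/- For r ∈ ℕ and s ∈ {1,2,...,r}, the r-derangement numbers satisfy the recurrence d_{k,r} = sum_{j=s}^{k} C(j-1, s-1) * (k! / (k-j)!) * d_{k-j, r-s}. -/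
/-!
Since `(1 - X)^{-(r+1)} = (1 - X)^{-s} (1 - X)^{-(r-s+1)}`, the exponential generating function
of `d_{·,r}` is that of `d_{·,r-s}` multiplied by `X^s (1 - X)^{-s} = ∑_{j ≥ s} C(j-1, s-1) X^j`.
Comparing coefficients of `X^k`, the factor `k!` turns the Cauchy product into a binomial
convolution, i.e. `k!/(k-j)! = k.descFactorial j` in front of the `j`-th term.
-/

open Nat Finset PowerSeries

namespace PowerSeries

theorem inv_one_sub_pow_eq_invOneSubPow {K : Type*} [Field K] (n : ℕ) :
    ((1 - X : K⟦X⟧) ^ n)⁻¹ = invOneSubPow K n := by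
  rw [PowerSeries.inv_eq_iff_mul_eq_one (by simp), ← invOneSubPow_inv_eq_one_sub_pow]
  exact (invOneSubPow K n).val_inv

theorem coeff_X_pow_mul_invOneSubPow {S : Type*} [CommRing S] {s : ℕ} (hs : 0 < s) (j : ℕ) :
    coeff j (X ^ s * (invOneSubPow S s : S⟦X⟧)) =
      if s ≤ j then ((j - 1).choose (s - 1) : S) else 0 := by
  rw [coeff_X_pow_mul', invOneSubPow_val_eq_mk_sub_one_add_choose_of_pos S s hs, coeff_mk]
  split_ifs with h
  · congr 2
    omega
  · rfl

theorem eq_sum_descFactorial_of_mk_div_factorial_eq_mul {K : Type*} [Field K] [CharZero K]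
    {a b : ℕ → K} {F : K⟦X⟧} (h : mk (fun k ↦ a k / k !) = F * mk (fun k ↦ b k / k !)) (k : ℕ) :
    a k = ∑ j ∈ range (k + 1), coeff j F * (k.descFactorial j : K) * b (k - j) := by
  have hk := congrArg (coeff k) h
  rw [coeff_mk, coeff_mul, Nat.sum_antidiagonal_eq_sum_range_succ_mk,
    div_eq_iff (Nat.cast_ne_zero.mpr (factorial_ne_zero k)), sum_mul] at hk
  rw [hk]
  refine sum_congr rfl fun j hj ↦ ?_
  have hfac : ((k - j)! : K) * k.descFactorial j = k ! := by
    exact_mod_cast factorial_mul_descFactorial (Nat.le_of_lt_succ (mem_range.mp hj))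
  have hne : ((k - j)! : K) ≠ 0 := Nat.cast_ne_zero.mpr (factorial_ne_zero _)
  rw [coeff_mk, ← hfac]
  field_simp

end PowerSeries

/-- For `r ∈ ℕ` and `s ∈ {1,…,r}`, the `r`-derangement numbers `d_{k,r}`
(defined by the EGF `∑_k d_{k,r} t^k/k! = t^r e^{-t}/(1-t)^{r+1}`) satisfy
`d_{k,r} = ∑_{j=s}^{k} C(j-1, s-1) * (k!/(k-j)!) * d_{k-j, r-s}`. -/
theorem stmt_2 (d : ℕ → ℕ → ℚ)
    (hd : ∀ r : ℕ, PowerSeries.mk (fun k => d k r / (k ! : ℚ)) =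
      X ^ r * rescale (-1 : ℚ) (exp ℚ) * ((1 - X) ^ (r + 1))⁻¹)
    (r s k : ℕ) (hs1 : 1 ≤ s) (hsr : s ≤ r) :
    d k r = ∑ j ∈ Finset.Icc s k,
      ((j - 1).choose (s - 1) : ℚ) * (k.descFactorial j : ℚ) * d (k - j) (r - s) := by
  have hfactor : PowerSeries.mk (fun k ↦ d k r / k !) =
      X ^ s * (invOneSubPow ℚ s : ℚ⟦X⟧) * PowerSeries.mk (fun k ↦ d k (r - s) / k !) := by
    obtain ⟨m, rfl⟩ : ∃ m, r = s + m := ⟨r - s, by omega⟩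
    rw [hd, hd, Nat.add_sub_cancel_left, add_assoc, pow_add, pow_add, PowerSeries.mul_inv_rev,
      inv_one_sub_pow_eq_invOneSubPow s]
    ring
  rw [eq_sum_descFactorial_of_mk_div_factorial_eq_mul hfactor k]
  simp only [coeff_X_pow_mul_invOneSubPow hs1, ite_mul, zero_mul, ← sum_filter]
  congr 1
  ext j
  simp only [mem_filter, mem_range, mem_Icc]
  omega
end

section
/- The r-deranged Bell numbers B^r_n defined by B^r_n = sum_{i=0}^{n} d_{i,r} * S(n+r, i+r)_r have exponential generating function sum_{n=0}^∞ B^r_n t^n/n! = e^{rt} (e^t - 1)^r e^{-(e^t - 1)} / (2 - e^t)^{r+1}, as formal power series over ℚ. -/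
open Nat Finset PowerSeries

/-!
Since the `k`-th column of `S` has EGF `e^{rt}(e^t-1)^k/k!`, the EGF of `∑ᵢ dᵢ S(n,i)` is
`e^{rt} D(e^t-1)`, where `D` is the EGF of the `dᵢ`. Substituting `e^t-1` for `t` in
`D(t)(1-t)^{r+1} = t^r e^{-t}` then gives the formula, because `E` is the substitution
`e^{-t} ∘ (e^t-1)`: the product `E · exp(e^t-1)` has derivative zero and constant term one.
-/

theorem PowerSeries.coeff_mul_subst_of_constantCoeff_eq_zero {R : Type*} [CommRing R]
    (A f : R⟦X⟧) {g : R⟦X⟧} (hg : constantCoeff g = 0) (n : ℕ) :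
    coeff n (A * f.subst g) = ∑ k ∈ range (n + 1), coeff k f * coeff n (A * g ^ k) := by
  have hsub : HasSubst g := .of_constantCoeff_zero' hg
  obtain ⟨h, hf⟩ : X ^ (n + 1) ∣ f - (trunc (n + 1) f : R⟦X⟧) :=
    X_pow_dvd_iff.mpr fun m hm => by simp [coeff_trunc, hm]
  have hfg : f.subst g =
      ∑ k ∈ range (n + 1), C (coeff k f) * g ^ k + g ^ (n + 1) * h.subst g := by
    conv_lhs => rw [sub_eq_iff_eq_add'.mp hf, subst_add hsub, subst_coe hsub,
      Polynomial.aeval_eq_sum_range' (natDegree_trunc_lt f n), subst_mul hsub, subst_pow hsub,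
      subst_X hsub]
    refine congrArg (· + _) (sum_congr rfl fun k hk => ?_)
    rw [coeff_trunc, if_pos (mem_range.mp hk), smul_eq_C_mul]
  have htail : coeff n (A * (g ^ (n + 1) * h.subst g)) = 0 := by
    obtain ⟨u, hu⟩ : X ^ (n + 1) ∣ g ^ (n + 1) := pow_dvd_pow_of_dvd (X_dvd_iff.mpr hg) _
    rw [hu, mul_left_comm, mul_assoc, coeff_X_pow_mul', if_neg (by omega)]
  rw [hfg, mul_add, map_add, htail, add_zero, mul_sum, map_sum]
  exact sum_congr rfl fun k _ => by rw [mul_left_comm, coeff_C_mul]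

theorem PowerSeries.constantCoeff_subst_of_constantCoeff_eq_zero {R : Type*} [CommRing R]
    (f : R⟦X⟧) {g : R⟦X⟧} (hg : constantCoeff g = 0) :
    constantCoeff (f.subst g) = constantCoeff f := by
  simpa using coeff_mul_subst_of_constantCoeff_eq_zero 1 f hg 0

theorem constantCoeff_exp_sub_one : constantCoeff (exp ℚ - 1) = 0 := by
  simp [constantCoeff_exp]

theorem hasSubst_exp_sub_one : HasSubst (exp ℚ - 1) :=
  .of_constantCoeff_zero' constantCoeff_exp_sub_one

theorem derivative_exp_sub_one : d⁄dX ℚ (exp ℚ - 1) = exp ℚ := by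
  rw [map_sub, derivative_exp, derivative_one, sub_zero]

theorem eq_subst_exp_sub_one_of_derivative_eq_neg_exp_mul {E : ℚ⟦X⟧}
    (hE0 : constantCoeff E = 1) (hE : d⁄dX ℚ E = -exp ℚ * E) :
    E = (rescale (-1) (exp ℚ)).subst (exp ℚ - 1) := by
  have hinv : E * (exp ℚ).subst (exp ℚ - 1) = 1 := by
    refine derivative.ext ?_ ?_
    · rw [Derivation.leibniz, derivative_subst hasSubst_exp_sub_one, derivative_exp,
        derivative_exp_sub_one, hE, derivative_one, smul_eq_mul, smul_eq_mul]
      ring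
    · rw [map_mul, hE0, constantCoeff_subst_of_constantCoeff_eq_zero _ constantCoeff_exp_sub_one,
        constantCoeff_exp, one_mul, map_one]
  have hneg : (rescale (-1) (exp ℚ)).subst (exp ℚ - 1) * (exp ℚ).subst (exp ℚ - 1) = 1 := by
    rw [← subst_mul hasSubst_exp_sub_one, mul_comm]
    change (exp ℚ * evalNegHom (exp ℚ)).subst _ = 1
    rw [exp_mul_exp_neg_eq_one, ← coe_substAlgHom hasSubst_exp_sub_one, map_one]
  linear_combination (rescale (-1) (exp ℚ)).subst (exp ℚ - 1) * hinv - E * hneg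

theorem mk_sum_mul_div_factorial_eq_rescale_exp_mul_subst (r : ℕ) (d : ℕ → ℚ)
    (S : ℕ → ℕ → ℚ) (hS : ∀ k : ℕ, PowerSeries.mk (fun n => S n k / (n ! : ℚ)) =
      rescale (r : ℚ) (exp ℚ) * (exp ℚ - 1) ^ k * (PowerSeries.C (k ! : ℚ))⁻¹) :
    PowerSeries.mk (fun n => (∑ i ∈ range (n + 1), d i * S n i) / (n ! : ℚ)) =
      rescale (r : ℚ) (exp ℚ) * (PowerSeries.mk fun k => d k / (k ! : ℚ)).subst (exp ℚ - 1) := by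
  ext n
  rw [coeff_mk, coeff_mul_subst_of_constantCoeff_eq_zero _ _ constantCoeff_exp_sub_one, sum_div]
  refine sum_congr rfl fun k _ => ?_
  have hSk := congrArg (coeff n) (hS k)
  rw [C_inv, coeff_mul_C, coeff_mk] at hSk
  have hk : (k ! : ℚ) ≠ 0 := by positivity
  rw [coeff_mk, ← (eq_mul_inv_iff_mul_eq₀ hk).mp hSk]
  field_simp

theorem subst_exp_sub_one_eq_of_mul_one_sub_X_pow_eq (r : ℕ) (D : ℚ⟦X⟧) {E : ℚ⟦X⟧}
    (hD : D * (1 - X) ^ (r + 1) = X ^ r * rescale (-1) (exp ℚ))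
    (hE0 : constantCoeff E = 1) (hE : d⁄dX ℚ E = -exp ℚ * E) :
    D.subst (exp ℚ - 1) * (2 - exp ℚ) ^ (r + 1) = (exp ℚ - 1) ^ r * E := by
  have h := congrArg (substAlgHom hasSubst_exp_sub_one) hD
  simp only [map_mul, map_pow, map_sub, map_one, substAlgHom_X,
    coe_substAlgHom hasSubst_exp_sub_one] at h
  rw [eq_subst_exp_sub_one_of_derivative_eq_neg_exp_mul hE0 hE, ← h]
  ring

/-- The `r`-deranged Bell numbers `B^r_n = ∑_{i=0}^n d_{i,r} S(n+r,i+r)_r` have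
EGF `e^{rt}(e^t-1)^r e^{-(e^t-1)}/(2-e^t)^{r+1}`, as formal power series over `ℚ`.
Here `d` are the `r`-derangement numbers given by their EGF, `S n i` is the
`r`-Stirling number `S(n+r,i+r)_r` given by its EGF, and `E = e^{-(e^t-1)}`
is characterized by `E(0) = 1` and `E' = -e^t · E`. -/
theorem stmt_3 (r : ℕ) (d : ℕ → ℚ) (S : ℕ → ℕ → ℚ) (E : PowerSeries ℚ)
    (hd : PowerSeries.mk (fun k => d k / (k ! : ℚ)) =
      X ^ r * rescale (-1 : ℚ) (exp ℚ) * ((1 - X) ^ (r + 1))⁻¹)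
    (hS : ∀ k : ℕ, PowerSeries.mk (fun n => S n k / (n ! : ℚ)) =
      rescale (r : ℚ) (exp ℚ) * (exp ℚ - 1) ^ k * (PowerSeries.C (k ! : ℚ))⁻¹)
    (hE0 : PowerSeries.constantCoeff E = 1)
    (hE : d⁄dX ℚ E = -(exp ℚ) * E) :
    PowerSeries.mk (fun n => (∑ i ∈ Finset.range (n + 1), d i * S n i) / (n ! : ℚ)) =
      rescale (r : ℚ) (exp ℚ) * (exp ℚ - 1) ^ r * E * ((2 - exp ℚ) ^ (r + 1))⁻¹ := by
  have h2 : constantCoeff ((2 - exp ℚ) ^ (r + 1)) ≠ 0 := by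
    rw [map_pow, map_sub, constantCoeff_exp, map_ofNat]
    norm_num
  rw [eq_mul_inv_iff_mul_eq (by simp)] at hd
  rw [mk_sum_mul_div_factorial_eq_rescale_exp_mul_subst r d S hS, mul_assoc _ _ E,
    ← subst_exp_sub_one_eq_of_mul_one_sub_X_pow_eq r _ hd hE0 hE, mul_assoc, mul_assoc,
    PowerSeries.mul_inv_cancel _ h2, mul_one]
end

section
/- For a fixed nonnegative integer r and a formal variable (or real parameter) x, we have sum_{n=0}^∞ (sum_{k=0}^n d_{k,r} x^k S(n+r,k+r)_r) t^n/n! = e^{rt} (x(e^t-1))^r e^{-x(e^t-1)} / (1 - x(e^t-1))^{r+1}, as formal power series in t over ℚ[x]. -/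
open Nat Finset PowerSeries



noncomputable def pSum (u f : PowerSeries ℚ) (m : ℕ) : PowerSeries ℚ :=
  ∑ k ∈ Finset.range (m + 1), PowerSeries.C (PowerSeries.coeff k f) * u ^ k

noncomputable def subU (u f : PowerSeries ℚ) : PowerSeries ℚ :=
  PowerSeries.mk fun n => PowerSeries.coeff n (pSum u f n)

lemma coeff_u_pow {u : PowerSeries ℚ} (hu : PowerSeries.constantCoeff u = 0)
    {n k : ℕ} (h : n < k) : PowerSeries.coeff n (u ^ k) = 0 := by
  have hdvd : (X : ℚ⟦X⟧) ^ k ∣ u ^ k :=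
    pow_dvd_pow_of_dvd (PowerSeries.X_dvd_iff.mpr hu) k
  exact PowerSeries.X_pow_dvd_iff.mp hdvd n h

lemma coeff_pSum (u f : PowerSeries ℚ) (m : ℕ) (n : ℕ) :
    PowerSeries.coeff n (pSum u f m) =
      ∑ k ∈ Finset.range (m + 1),
        PowerSeries.coeff k f * PowerSeries.coeff n (u ^ k) := by
  simp [pSum, PowerSeries.coeff_C_mul]

lemma coeff_subU {u : PowerSeries ℚ} (hu : PowerSeries.constantCoeff u = 0)
    (f : PowerSeries ℚ) {n m : ℕ} (h : n ≤ m) :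
    PowerSeries.coeff n (subU u f) = PowerSeries.coeff n (pSum u f m) := by
  rw [subU, PowerSeries.coeff_mk, coeff_pSum, coeff_pSum]
  refine Finset.sum_subset (Finset.range_subset_range.mpr (Nat.succ_le_succ h)) ?_
  intro k hk hk'
  have : n < k := by
    simp only [Finset.mem_range, not_lt] at hk'
    omega
  rw [coeff_u_pow hu this, mul_zero]

lemma subU_one (u : PowerSeries ℚ) : subU u 1 = 1 := by
  ext n
  rw [subU, PowerSeries.coeff_mk, coeff_pSum]
  rw [Finset.sum_eq_single 0]
  · simp
  · intro k _ hk
    rw [PowerSeries.coeff_one, if_neg hk, zero_mul]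
  · simp

lemma subU_X {u : PowerSeries ℚ} (hu : PowerSeries.constantCoeff u = 0) :
    subU u X = u := by
  ext n
  rw [coeff_subU hu X (Nat.le_succ n), coeff_pSum]
  rw [Finset.sum_eq_single 1]
  · simp
  · intro k _ hk
    rw [PowerSeries.coeff_X, if_neg hk, zero_mul]
  · intro h
    exact absurd (Finset.mem_range.mpr (by omega)) h

lemma subU_add (u f g : PowerSeries ℚ) : subU u (f + g) = subU u f + subU u g := by
  ext n
  simp [subU, coeff_pSum, add_mul, Finset.sum_add_distrib]

lemma subU_neg (u f : PowerSeries ℚ) : subU u (-f) = -subU u f := by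
  ext n
  simp [subU, coeff_pSum, Finset.sum_neg_distrib]

lemma subU_sub (u f g : PowerSeries ℚ) : subU u (f - g) = subU u f - subU u g := by
  rw [sub_eq_add_neg, subU_add, subU_neg, sub_eq_add_neg]

lemma subU_mul {u : PowerSeries ℚ} (hu : PowerSeries.constantCoeff u = 0)
    (f g : PowerSeries ℚ) : subU u (f * g) = subU u f * subU u g := by
  ext n
  have hR : PowerSeries.coeff n (subU u f * subU u g) =
      PowerSeries.coeff n (pSum u f n * pSum u g n) := by
    rw [PowerSeries.coeff_mul, PowerSeries.coeff_mul]
    refine Finset.sum_congr rfl ?_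
    intro p hp
    rw [Finset.HasAntidiagonal.mem_antidiagonal] at hp
    rw [coeff_subU hu f (show p.1 ≤ n by omega), coeff_subU hu g (show p.2 ≤ n by omega)]
  rw [hR, subU, PowerSeries.coeff_mk, coeff_pSum]
  have hprod : pSum u f n * pSum u g n =
      ∑ k ∈ Finset.range (n + 1), ∑ l ∈ Finset.range (n + 1),
        PowerSeries.C (PowerSeries.coeff k f * PowerSeries.coeff l g) * u ^ (k + l) := by
    rw [pSum, pSum, Finset.sum_mul_sum]
    refine Finset.sum_congr rfl fun k _ => Finset.sum_congr rfl fun l _ => ?_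
    rw [map_mul, pow_add]; ring
  have hprod2 : PowerSeries.coeff n (pSum u f n * pSum u g n) =
      ∑ k ∈ Finset.range (n + 1), ∑ l ∈ Finset.range (n + 1),
        PowerSeries.coeff k f * PowerSeries.coeff l g *
          PowerSeries.coeff n (u ^ (k + l)) := by
    rw [hprod]
    simp only [map_sum, PowerSeries.coeff_C_mul]
  rw [hprod2]
  simp only [PowerSeries.coeff_mul]
  -- LHS: ∑_{m≤n} (∑_{p ∈ antidiagonal m} f_{p1} g_{p2}) * coeff n (u^m)
  -- RHS: ∑_{k≤n} ∑_{l≤n} f_k g_l * coeff n (u^{k+l})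
  have hL : ∑ m ∈ Finset.range (n + 1),
      (∑ p ∈ Finset.HasAntidiagonal.antidiagonal m,
        PowerSeries.coeff p.1 f * PowerSeries.coeff p.2 g) * PowerSeries.coeff n (u ^ m) =
      ∑ p ∈ (Finset.range (n + 1)).sigma (fun m => Finset.HasAntidiagonal.antidiagonal m),
        PowerSeries.coeff p.2.1 f * PowerSeries.coeff p.2.2 g *
          PowerSeries.coeff n (u ^ (p.2.1 + p.2.2)) := by
    rw [Finset.sum_sigma]
    refine Finset.sum_congr rfl fun m _ => ?_
    rw [Finset.sum_mul]
    refine Finset.sum_congr rfl fun p hp => ?_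
    rw [Finset.HasAntidiagonal.mem_antidiagonal] at hp
    rw [hp]
  rw [hL]
  set T : Finset (ℕ × ℕ) :=
    (Finset.range (n + 1) ×ˢ Finset.range (n + 1)).filter (fun q => q.1 + q.2 ≤ n) with hT
  have hR2 : ∑ k ∈ Finset.range (n + 1), ∑ l ∈ Finset.range (n + 1),
      PowerSeries.coeff k f * PowerSeries.coeff l g * PowerSeries.coeff n (u ^ (k + l)) =
      ∑ q ∈ T, PowerSeries.coeff q.1 f * PowerSeries.coeff q.2 g *
        PowerSeries.coeff n (u ^ (q.1 + q.2)) := by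
    rw [← Finset.sum_product']
    rw [hT]
    refine (Finset.sum_filter_of_ne ?_).symm
    intro q _ hq
    by_contra hle
    exact hq (by rw [coeff_u_pow hu (show n < q.1 + q.2 by omega), mul_zero])
  rw [hR2]
  refine Finset.sum_nbij' (fun p => p.2) (fun q => ⟨q.1 + q.2, q⟩) ?_ ?_ ?_ ?_ ?_
  · intro p hp
    rw [Finset.mem_sigma] at hp
    obtain ⟨h1, h2⟩ := hp
    rw [Finset.HasAntidiagonal.mem_antidiagonal] at h2
    rw [Finset.mem_range] at h1
    simp only [hT, Finset.mem_filter, Finset.mem_product, Finset.mem_range]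
    omega
  · intro q hq
    simp only [hT, Finset.mem_filter, Finset.mem_product, Finset.mem_range] at hq
    refine Finset.mem_sigma.mpr ⟨Finset.mem_range.mpr ?_, Finset.HasAntidiagonal.mem_antidiagonal.mpr rfl⟩
    show q.1 + q.2 < n + 1
    omega
  · intro p hp
    rw [Finset.mem_sigma] at hp
    obtain ⟨h1, h2⟩ := hp
    rw [Finset.HasAntidiagonal.mem_antidiagonal] at h2
    exact Sigma.ext h2 (by simp)
  · intro q _
    rfl
  · intro p _
    rfl

lemma subU_C (u : PowerSeries ℚ) (a : ℚ) :
    subU u (PowerSeries.C a) = PowerSeries.C a := by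
  ext n
  rw [subU, PowerSeries.coeff_mk, coeff_pSum]
  rw [Finset.sum_eq_single 0]
  · simp [PowerSeries.coeff_C]
  · intro k _ hk
    rw [PowerSeries.coeff_C, if_neg hk, zero_mul]
  · simp

lemma subU_pow {u : PowerSeries ℚ} (hu : PowerSeries.constantCoeff u = 0)
    (f : PowerSeries ℚ) (k : ℕ) : subU u (f ^ k) = subU u f ^ k := by
  induction k with
  | zero => simpa using subU_one u
  | succ m ih => rw [pow_succ, pow_succ, subU_mul hu, ih]

lemma subU_deriv {u : PowerSeries ℚ} (hu : PowerSeries.constantCoeff u = 0)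
    (f : PowerSeries ℚ) :
    d⁄dX ℚ (subU u f) = subU u (d⁄dX ℚ f) * d⁄dX ℚ u := by
  ext n
  rw [PowerSeries.coeff_derivative, coeff_subU hu f (le_refl (n + 1)),
    ← PowerSeries.coeff_derivative]
  have hder : d⁄dX ℚ (pSum u f (n + 1)) = pSum u (d⁄dX ℚ f) n * d⁄dX ℚ u := by
    rw [pSum, map_sum, Finset.sum_range_succ']
    have h0 : d⁄dX ℚ (PowerSeries.C (PowerSeries.coeff 0 f) * u ^ 0) = 0 := by
      simp
    rw [h0, add_zero, pSum, Finset.sum_mul]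
    refine Finset.sum_congr rfl fun j _ => ?_
    rw [PowerSeries.coeff_derivative, Derivation.leibniz, Derivation.leibniz_pow,
      PowerSeries.derivative_C, smul_zero, add_zero, smul_eq_mul,
      Nat.succ_sub_one, nsmul_eq_mul, ← map_natCast (PowerSeries.C (R := ℚ)) (j + 1), map_mul]
    push_cast
    simp only [smul_eq_mul]
    ring
  rw [hder, PowerSeries.coeff_mul, PowerSeries.coeff_mul]
  refine Finset.sum_congr rfl fun p hp => ?_
  rw [Finset.HasAntidiagonal.mem_antidiagonal] at hp
  rw [coeff_subU hu _ (show p.1 ≤ n by omega)]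

lemma ode_unique (h f g : PowerSeries ℚ) (hf : d⁄dX ℚ f = h * f) (hg : d⁄dX ℚ g = h * g)
    (h0 : PowerSeries.constantCoeff f = PowerSeries.constantCoeff g) : f = g := by
  ext n
  induction n using Nat.strong_induction_on with
  | _ n ih =>
    match n with
    | 0 => simpa using h0
    | Nat.succ m =>
      have hfc := PowerSeries.coeff_derivative f m
      have hgc := PowerSeries.coeff_derivative g m
      rw [hf] at hfc
      rw [hg] at hgc
      have hcoe : PowerSeries.coeff m (h * f) = PowerSeries.coeff m (h * g) := by
        rw [PowerSeries.coeff_mul, PowerSeries.coeff_mul]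
        refine Finset.sum_congr rfl fun p hp => ?_
        rw [Finset.HasAntidiagonal.mem_antidiagonal] at hp
        rw [ih p.2 (by omega)]
      have hm : ((m : ℚ) + 1) ≠ 0 := by positivity
      have := hfc.symm.trans (hcoe.trans hgc)
      exact mul_right_cancel₀ hm this

lemma derivExpQ : d⁄dX ℚ (exp ℚ) = exp ℚ := by
  ext n
  rw [PowerSeries.coeff_derivative, PowerSeries.coeff_exp, PowerSeries.coeff_exp]
  simp only [Algebra.algebraMap_self, RingHom.id_apply, factorial_succ]
  have h1 : ((n ! : ℚ)) ≠ 0 := by positivity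
  have h2 : ((n : ℚ) + 1) ≠ 0 := by positivity
  field_simp
  push_cast
  ring

lemma deriv_rescale_neg_exp :
    d⁄dX ℚ (rescale (-1 : ℚ) (exp ℚ)) = -rescale (-1 : ℚ) (exp ℚ) := by
  ext n
  rw [PowerSeries.coeff_derivative, map_neg, PowerSeries.coeff_rescale,
    PowerSeries.coeff_rescale, PowerSeries.coeff_exp, PowerSeries.coeff_exp]
  simp only [Algebra.algebraMap_self, RingHom.id_apply, factorial_succ, pow_succ]
  have h1 : ((n ! : ℚ)) ≠ 0 := by positivity
  have h2 : ((n : ℚ) + 1) ≠ 0 := by positivity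
  field_simp
  push_cast
  ring



/-- λ = 1 specialization (α → 0, β = 1, γ = r): for the polynomial `r`-deranged
Bell numbers, `∑_{n≥0} (∑_{k=0}^n d_{k,r} x^k S(n+r,k+r)_r) t^n/n!
  = e^{rt} (x(e^t-1))^r e^{-x(e^t-1)} / (1 - x(e^t-1))^{r+1}`,
as formal power series in `t` (with `x` an arbitrary rational parameter).
Here `d` are the `r`-derangement numbers given by their EGF, `S n k` the
`r`-Stirling numbers given by their EGF, and `E = e^{-x(e^t-1)}` is
characterized by `E(0) = 1` and `E' = -x e^t · E`. -/
theorem stmt_4 (r : ℕ) (x : ℚ) (d : ℕ → ℚ) (S : ℕ → ℕ → ℚ) (E : PowerSeries ℚ)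
    (hd : PowerSeries.mk (fun k => d k / (k ! : ℚ)) =
      X ^ r * rescale (-1 : ℚ) (exp ℚ) * ((1 - X) ^ (r + 1))⁻¹)
    (hS : ∀ k : ℕ, PowerSeries.mk (fun n => S n k / (n ! : ℚ)) =
      rescale (r : ℚ) (exp ℚ) * (exp ℚ - 1) ^ k * (PowerSeries.C (k ! : ℚ))⁻¹)
    (hE0 : PowerSeries.constantCoeff E = 1)
    (hE : d⁄dX ℚ E = -(PowerSeries.C x * exp ℚ) * E) :
    PowerSeries.mk (fun n =>
        (∑ k ∈ Finset.range (n + 1), d k * x ^ k * S n k) / (n ! : ℚ)) =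
      rescale (r : ℚ) (exp ℚ) * (PowerSeries.C x * (exp ℚ - 1)) ^ r * E *
        ((1 - PowerSeries.C x * (exp ℚ - 1)) ^ (r + 1))⁻¹ := by
  set u : PowerSeries ℚ := PowerSeries.C x * (exp ℚ - 1) with hu_def
  have hu : PowerSeries.constantCoeff u = 0 := by
    simp [hu_def, PowerSeries.constantCoeff_exp]
  -- derivative of u
  have du : d⁄dX ℚ u = PowerSeries.C x * exp ℚ := by
    rw [hu_def, Derivation.leibniz, PowerSeries.derivative_C, smul_zero, add_zero,
      smul_eq_mul, map_sub, derivExpQ]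
    simp
  -- E is the substitution of e^{-t} into u
  have hGE : subU u (rescale (-1 : ℚ) (exp ℚ)) = E := by
    refine ode_unique (-(PowerSeries.C x * exp ℚ)) _ _ ?_ hE ?_
    · rw [subU_deriv hu, deriv_rescale_neg_exp, subU_neg, du]
      ring
    · rw [hE0, ← PowerSeries.coeff_zero_eq_constantCoeff_apply, subU,
        PowerSeries.coeff_mk, coeff_pSum]
      simp [PowerSeries.coeff_rescale, PowerSeries.coeff_zero_eq_constantCoeff,
        PowerSeries.constantCoeff_exp]
  -- substitution of the inverse
  have hP : subU u ((1 - X) ^ (r + 1)) = (1 - u) ^ (r + 1) := by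
    rw [subU_pow hu, subU_sub, subU_one, subU_X hu]
  have hPc : PowerSeries.constantCoeff ((1 - X : ℚ⟦X⟧) ^ (r + 1)) ≠ 0 := by
    simp
  have hQc : PowerSeries.constantCoeff ((1 - u) ^ (r + 1)) ≠ 0 := by
    simp [hu]
  have hPinv : subU u (((1 - X : ℚ⟦X⟧) ^ (r + 1))⁻¹) = ((1 - u) ^ (r + 1))⁻¹ := by
    have h1 : ((1 - X : ℚ⟦X⟧) ^ (r + 1)) * ((1 - X : ℚ⟦X⟧) ^ (r + 1))⁻¹ = 1 :=
      PowerSeries.mul_inv_cancel _ hPc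
    have h2 : subU u (((1 - X : ℚ⟦X⟧) ^ (r + 1))⁻¹) * (1 - u) ^ (r + 1) = 1 := by
      rw [← hP, mul_comm, ← subU_mul hu, h1, subU_one]
    exact (PowerSeries.eq_inv_iff_mul_eq_one hQc).mpr h2
  -- substitution of the derangement EGF
  have hF : subU u (PowerSeries.mk (fun k => d k / (k ! : ℚ))) =
      u ^ r * E * ((1 - u) ^ (r + 1))⁻¹ := by
    rw [hd, subU_mul hu, subU_mul hu, subU_pow hu, subU_X hu, hPinv, hGE]
  -- the key coefficient identity
  have key : PowerSeries.mk (fun n =>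
      (∑ k ∈ Finset.range (n + 1), d k * x ^ k * S n k) / (n ! : ℚ)) =
      rescale (r : ℚ) (exp ℚ) * subU u (PowerSeries.mk (fun k => d k / (k ! : ℚ))) := by
    ext n
    have step1 : PowerSeries.coeff n
        (rescale (r : ℚ) (exp ℚ) * subU u (PowerSeries.mk (fun k => d k / (k ! : ℚ)))) =
        PowerSeries.coeff n
        (rescale (r : ℚ) (exp ℚ) * pSum u (PowerSeries.mk (fun k => d k / (k ! : ℚ))) n) := by
      rw [PowerSeries.coeff_mul, PowerSeries.coeff_mul]
      refine Finset.sum_congr rfl fun p hp => ?_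
      rw [Finset.HasAntidiagonal.mem_antidiagonal] at hp
      rw [coeff_subU hu _ (show p.2 ≤ n by omega)]
    rw [PowerSeries.coeff_mk, step1]
    have step2 : rescale (r : ℚ) (exp ℚ) * pSum u (PowerSeries.mk (fun k => d k / (k ! : ℚ))) n =
        ∑ k ∈ Finset.range (n + 1),
          PowerSeries.C (d k / (k ! : ℚ) * x ^ k * (k ! : ℚ)) *
            PowerSeries.mk (fun m => S m k / (m ! : ℚ)) := by
      rw [pSum, Finset.mul_sum]
      refine Finset.sum_congr rfl fun k _ => ?_
      have hCk : PowerSeries.constantCoeff (PowerSeries.C (k ! : ℚ)) ≠ 0 := by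
        simp [Nat.factorial_ne_zero]
      have hSk : PowerSeries.mk (fun m => S m k / (m ! : ℚ)) * PowerSeries.C (k ! : ℚ) =
          rescale (r : ℚ) (exp ℚ) * (exp ℚ - 1) ^ k := by
        rw [hS k, mul_assoc, mul_comm ((PowerSeries.C ((k ! : ℚ)))⁻¹),
          PowerSeries.mul_inv_cancel _ hCk, mul_one]
      have huk : u ^ k = PowerSeries.C (x ^ k) * (exp ℚ - 1) ^ k := by
        rw [hu_def, mul_pow, map_pow]
      calc rescale (r : ℚ) (exp ℚ) * (PowerSeries.C (PowerSeries.coeff k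
            (PowerSeries.mk fun k => d k / (k ! : ℚ))) * u ^ k)
          = PowerSeries.C (d k / (k ! : ℚ)) * PowerSeries.C (x ^ k) *
            (rescale (r : ℚ) (exp ℚ) * (exp ℚ - 1) ^ k) := by
            rw [PowerSeries.coeff_mk, huk]; ring
        _ = _ := by
            rw [← hSk, map_mul, map_mul]; ring
    rw [step2, map_sum]
    rw [Finset.sum_div]
    refine Finset.sum_congr rfl fun k _ => ?_
    rw [PowerSeries.coeff_C_mul, PowerSeries.coeff_mk]
    have hk : ((k ! : ℚ)) ≠ 0 := by
      exact_mod_cast Nat.cast_ne_zero.mpr (Nat.factorial_ne_zero k)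
    field_simp
  rw [key, hF]
  ring
end

section
/- As formal power series over ℚ, the EGF identity sum_{n=0}^∞ (sum_{k=0}^n d_k S(n,k) x^k) t^n/n! = e^{-x(e^t-1)} / (1 - x(e^t-1)) holds, where d_k is the number of derangements of [k] and S(n,k) the Stirling numbers of the second kind. -/
open Nat Finset PowerSeries

private lemma ode_unique_s9 (c A B : PowerSeries ℚ)
    (hA : d⁄dX ℚ A = c * A) (hB : d⁄dX ℚ B = c * B)
    (h0 : PowerSeries.constantCoeff A = PowerSeries.constantCoeff B) : A = B := by
  ext n
  induction n using Nat.strong_induction_on with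
  | _ n ih =>
    match n with
    | 0 => simpa using h0
    | Nat.succ n =>
      have h1 : PowerSeries.coeff n (d⁄dX ℚ A) = PowerSeries.coeff n (d⁄dX ℚ B) := by
        rw [hA, hB, PowerSeries.coeff_mul, PowerSeries.coeff_mul]
        refine Finset.sum_congr rfl ?_
        rintro ⟨i, j⟩ hij
        have hj : i + j = n := Finset.HasAntidiagonal.mem_antidiagonal.1 hij
        rw [ih j (by omega)]
      rw [PowerSeries.coeff_derivative, PowerSeries.coeff_derivative] at h1
      have hne : ((n : ℚ) + 1) ≠ 0 := by positivity
      exact mul_right_cancel₀ hne h1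

/-- The `r = 0` case of the deranged Bell number generating function:
`∑_{n≥0} (∑_{k=0}^n d_k S(n,k) x^k) t^n/n! = e^{-x(e^t-1)}/(1-x(e^t-1))`,
where `d_k = k!∑_{i=0}^k (-1)^i/i!` are the derangement numbers, `S(n,k)` the
Stirling numbers of the second kind (given by their EGF), and
`E = e^{-x(e^t-1)}` is characterized by `E(0)=1`, `E' = -x e^t·E`. -/
theorem stmt_9 (x : ℚ) (d : ℕ → ℚ) (S : ℕ → ℕ → ℚ) (E : PowerSeries ℚ)
    (hd : ∀ k, d k = (k ! : ℚ) * ∑ i ∈ Finset.range (k + 1), (-1 : ℚ) ^ i / (i ! : ℚ))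
    (hS : ∀ k : ℕ, PowerSeries.mk (fun n => S n k / (n ! : ℚ)) =
      (exp ℚ - 1) ^ k * (PowerSeries.C (k ! : ℚ))⁻¹)
    (hE0 : PowerSeries.constantCoeff E = 1)
    (hE : d⁄dX ℚ E = -(PowerSeries.C x * exp ℚ) * E) :
    PowerSeries.mk (fun n =>
        (∑ k ∈ Finset.range (n + 1), d k * S n k * x ^ k) / (n ! : ℚ)) =
      E * (1 - PowerSeries.C x * (exp ℚ - 1))⁻¹ := by
  set u : PowerSeries ℚ := PowerSeries.C x * (exp ℚ - 1) with hu_def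
  set F : PowerSeries ℚ := PowerSeries.mk (fun n =>
      (∑ k ∈ Finset.range (n + 1), d k * S n k * x ^ k) / (n ! : ℚ)) with hF_def
  have hfac : ∀ k : ℕ, (k ! : ℚ) ≠ 0 := fun k => Nat.cast_ne_zero.2 k.factorial_ne_zero
  have hu0 : PowerSeries.constantCoeff u = 0 := by
    simp [hu_def, constantCoeff_exp]
  have hupow : ∀ i m : ℕ, m < i → PowerSeries.coeff m (u ^ i) = 0 := by
    intro i m him
    have hdvd : (PowerSeries.X : PowerSeries ℚ) ^ i ∣ u ^ i :=
      pow_dvd_pow_of_dvd (PowerSeries.X_dvd_iff.2 hu0) i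
    exact (PowerSeries.X_pow_dvd_iff.1 hdvd) m him
  -- (exp - 1)^k in terms of S
  have hpow : ∀ k, (exp ℚ - 1) ^ k =
      PowerSeries.mk (fun n => S n k / (n ! : ℚ)) * PowerSeries.C (k ! : ℚ) := by
    intro k
    rw [hS k, PowerSeries.C_inv, mul_assoc, ← map_mul, inv_mul_cancel₀ (hfac k), map_one, mul_one]
  have hcu : ∀ k m : ℕ, PowerSeries.coeff m (u ^ k) =
      x ^ k * (S m k / (m ! : ℚ)) * (k ! : ℚ) := by
    intro k m
    rw [hu_def, mul_pow, ← map_pow, PowerSeries.coeff_C_mul, hpow k,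
      PowerSeries.coeff_mul_C, PowerSeries.coeff_mk, mul_assoc]
  -- truncations
  set Fn : ℕ → PowerSeries ℚ :=
    fun n => ∑ k ∈ Finset.range (n + 1), PowerSeries.C (d k / (k ! : ℚ)) * u ^ k with hFn_def
  set Gn : ℕ → PowerSeries ℚ :=
    fun n => ∑ i ∈ Finset.range (n + 1),
      PowerSeries.C ((-1 : ℚ) ^ i / (i ! : ℚ)) * u ^ i with hGn_def
  have hFcoeff : ∀ m n : ℕ, m ≤ n →
      PowerSeries.coeff m F = PowerSeries.coeff m (Fn n) := by
    intro m n hmn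
    rw [hFn_def]
    simp only [map_sum, PowerSeries.coeff_C_mul]
    rw [← Finset.sum_subset (Finset.range_subset_range.2 (by omega : m + 1 ≤ n + 1))
      (by
        intro k hk hk2
        simp only [Finset.mem_range] at hk hk2
        rw [hupow k m (by omega), mul_zero])]
    rw [hF_def, PowerSeries.coeff_mk, Finset.sum_div]
    refine Finset.sum_congr rfl ?_
    intro k _
    rw [hcu k m]
    field_simp
  -- exact algebraic identity for the truncations
  have hd' : ∀ k : ℕ, PowerSeries.C (d k / (k ! : ℚ)) =
      ∑ i ∈ Finset.range (k + 1), PowerSeries.C ((-1 : ℚ) ^ i / (i ! : ℚ)) := by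
    intro k
    rw [← map_sum]
    congr 1
    rw [hd k, mul_comm, mul_div_assoc, div_self (hfac k), mul_one]
  have hFnG : ∀ n : ℕ, Fn n * (1 - u) =
      Gn n - (∑ i ∈ Finset.range (n + 1),
        PowerSeries.C ((-1 : ℚ) ^ i / (i ! : ℚ))) * u ^ (n + 1) := by
    intro n
    have h1 : Fn n = ∑ i ∈ Finset.range (n + 1),
        PowerSeries.C ((-1 : ℚ) ^ i / (i ! : ℚ)) * ∑ k ∈ Finset.Ico i (n + 1), u ^ k := by
      rw [hFn_def]
      simp only [hd', Finset.sum_mul, Finset.mul_sum]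
      simp only [Finset.range_eq_Ico]
      rw [← Finset.sum_Ico_Ico_comm 0 (n + 1)
        (fun i k => PowerSeries.C ((-1 : ℚ) ^ i / (i ! : ℚ)) * u ^ k)]
    rw [h1, Finset.sum_mul]
    have h2 : ∀ i ∈ Finset.range (n + 1),
        (PowerSeries.C ((-1 : ℚ) ^ i / (i ! : ℚ)) * ∑ k ∈ Finset.Ico i (n + 1), u ^ k) * (1 - u)
        = PowerSeries.C ((-1 : ℚ) ^ i / (i ! : ℚ)) * (u ^ i - u ^ (n + 1)) := by
      intro i hi
      rw [Finset.mem_range] at hi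
      have hgeo := geom_sum_Ico_mul u (by omega : i ≤ n + 1)
      rw [mul_assoc]
      congr 1
      have : (∑ k ∈ Finset.Ico i (n + 1), u ^ k) * (1 - u) =
          -((∑ k ∈ Finset.Ico i (n + 1), u ^ k) * (u - 1)) := by ring
      rw [this, hgeo]
      ring
    rw [Finset.sum_congr rfl h2]
    simp only [mul_sub]
    rw [Finset.sum_sub_distrib, hGn_def, Finset.sum_mul]
  -- key coefficient identity
  have hkey : ∀ m n : ℕ, m ≤ n →
      PowerSeries.coeff m (F * (1 - u)) = PowerSeries.coeff m (Gn n) := by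
    intro m n hmn
    have h1 : PowerSeries.coeff m (F * (1 - u)) =
        PowerSeries.coeff m (Fn n * (1 - u)) := by
      rw [PowerSeries.coeff_mul, PowerSeries.coeff_mul]
      refine Finset.sum_congr rfl ?_
      rintro ⟨i, j⟩ hij
      have : i + j = m := Finset.HasAntidiagonal.mem_antidiagonal.1 hij
      rw [hFcoeff i n (by omega)]
    rw [h1, hFnG n, map_sub]
    have h2 : PowerSeries.coeff m ((∑ i ∈ Finset.range (n + 1),
        PowerSeries.C ((-1 : ℚ) ^ i / (i ! : ℚ))) * u ^ (n + 1)) = 0 := by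
      rw [PowerSeries.coeff_mul]
      refine Finset.sum_eq_zero ?_
      rintro ⟨i, j⟩ hij
      have : i + j = m := Finset.HasAntidiagonal.mem_antidiagonal.1 hij
      rw [hupow (n + 1) j (by omega), mul_zero]
    rw [h2, sub_zero]
  -- derivative facts
  have hdexp : d⁄dX ℚ (exp ℚ) = exp ℚ := by
    ext n
    rw [PowerSeries.coeff_derivative, PowerSeries.coeff_exp, PowerSeries.coeff_exp]
    simp only [Algebra.algebraMap_self, RingHom.id_apply]
    rw [Nat.factorial_succ]
    push_cast
    have h1 : ((n : ℚ) + 1) ≠ 0 := by positivity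
    field_simp
  have hdu : d⁄dX ℚ u = PowerSeries.C x * exp ℚ := by
    rw [hu_def, Derivation.leibniz, PowerSeries.derivative_C, smul_zero, add_zero,
      map_sub, hdexp, Derivation.map_one_eq_zero, sub_zero, smul_eq_mul]
  have hdGn : ∀ N : ℕ, d⁄dX ℚ (Gn (N + 1)) = -(PowerSeries.C x * exp ℚ) * Gn N := by
    intro N
    rw [hGn_def]
    simp only [map_sum]
    have hterm : ∀ i : ℕ,
        d⁄dX ℚ (PowerSeries.C ((-1 : ℚ) ^ i / (i ! : ℚ)) * u ^ i) =
        PowerSeries.C ((-1 : ℚ) ^ i / (i ! : ℚ)) *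
          ((i : PowerSeries ℚ) * (u ^ (i - 1) * (PowerSeries.C x * exp ℚ))) := by
      intro i
      rw [Derivation.leibniz, PowerSeries.derivative_C, smul_zero, add_zero,
        Derivation.leibniz_pow, hdu, smul_eq_mul, smul_eq_mul, nsmul_eq_mul]
    rw [Finset.sum_congr rfl (fun i _ => hterm i)]
    rw [Finset.sum_range_succ']
    simp only [Nat.cast_zero, zero_mul, mul_zero, add_zero]
    rw [neg_mul, Finset.mul_sum, ← Finset.sum_neg_distrib]
    refine Finset.sum_congr rfl ?_
    intro i _
    have hsc : ((-1 : ℚ) ^ (i + 1) / ((i + 1)! : ℚ)) * ((i : ℚ) + 1) =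
        -((-1 : ℚ) ^ i / (i ! : ℚ)) := by
      rw [Nat.factorial_succ]
      push_cast
      have h1 : ((i : ℚ) + 1) ≠ 0 := by positivity
      field_simp
      ring
    have : ((i + 1 : ℕ) : PowerSeries ℚ) = PowerSeries.C ((i : ℚ) + 1) := by
      rw [← map_natCast (PowerSeries.C) (i + 1)]
      push_cast
      ring_nf
    rw [this]
    simp only [Nat.add_sub_cancel]
    rw [show PowerSeries.C ((-1 : ℚ) ^ (i + 1) / ((i + 1)! : ℚ)) *
        (PowerSeries.C ((i : ℚ) + 1) * (u ^ i * (PowerSeries.C x * exp ℚ))) =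
        (PowerSeries.C ((-1 : ℚ) ^ (i + 1) / ((i + 1)! : ℚ)) * PowerSeries.C ((i : ℚ) + 1)) *
        (u ^ i * (PowerSeries.C x * exp ℚ)) from by ring, ← map_mul, hsc, map_neg]
    ring
  -- the ODE for F * (1 - u)
  have hODE : d⁄dX ℚ (F * (1 - u)) = -(PowerSeries.C x * exp ℚ) * (F * (1 - u)) := by
    ext n
    rw [PowerSeries.coeff_derivative, hkey (n + 1) (n + 1) le_rfl, ← PowerSeries.coeff_derivative,
      hdGn n, PowerSeries.coeff_mul, PowerSeries.coeff_mul]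
    refine Finset.sum_congr rfl ?_
    rintro ⟨i, j⟩ hij
    have : i + j = n := Finset.HasAntidiagonal.mem_antidiagonal.1 hij
    rw [hkey j n (by omega)]
  have hc0 : PowerSeries.constantCoeff (F * (1 - u)) = 1 := by
    rw [← PowerSeries.coeff_zero_eq_constantCoeff_apply, hkey 0 0 le_rfl, hGn_def]
    simp
  have hEF : E = F * (1 - u) :=
    ode_unique_s9 (-(PowerSeries.C x * exp ℚ)) E (F * (1 - u)) hE hODE (by rw [hE0, hc0])
  have hinv : (1 - u) * (1 - u)⁻¹ = 1 := by
    refine PowerSeries.mul_inv_cancel _ ?_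
    rw [map_sub, hu0, map_one, sub_zero]
    exact one_ne_zero
  rw [hEF, mul_assoc, hinv, mul_one]
end

section
/- For integers k ≥ r ≥ 1, the r-derangement numbers satisfy d_{k,r} = sum_{j=r}^{k} C(j-1, r-1) * k!/(k-j)! * d_{k-j}, where d_m = d_{m,0} is the ordinary derangement number (so that e^{-t}/(1-t) = sum_{k≥0} d_k t^k/k! as formal power series over ℚ). -/
open Nat Finset PowerSeries

lemma aux_inv_split (r : ℕ) (hr : 1 ≤ r) :
    ((1 - X : ℚ⟦X⟧) ^ (r + 1))⁻¹ =
      (PowerSeries.mk fun _ => (1 : ℚ)) * PowerSeries.mk (fun n => ((r - 1 + n).choose (r - 1) : ℚ)) := by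
  rw [PowerSeries.inv_eq_iff_mul_eq_one]
  · obtain ⟨s, rfl⟩ := Nat.exists_eq_add_of_le hr
    have h1 : (PowerSeries.mk fun _ => (1 : ℚ)) * (1 - X) = 1 := by
      have := PowerSeries.mk_one_mul_one_sub_eq_one ℚ
      simpa [Pi.one_def] using this
    have h2 : (PowerSeries.mk (fun n => ((1 + s - 1 + n).choose (1 + s - 1) : ℚ))) * (1 - X) ^ (s + 1) = 1 := by
      have := PowerSeries.mk_add_choose_mul_one_sub_pow_eq_one (S := ℚ) (d := s)
      simpa [Nat.add_comm 1 s] using this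
    calc (PowerSeries.mk fun _ => (1:ℚ)) * PowerSeries.mk (fun n => ((1 + s - 1 + n).choose (1 + s - 1) : ℚ)) *
          (1 - X) ^ (1 + s + 1)
        = ((PowerSeries.mk fun _ => (1:ℚ)) * (1 - X)) *
          ((PowerSeries.mk (fun n => ((1 + s - 1 + n).choose (1 + s - 1) : ℚ))) * (1 - X) ^ (s + 1)) := by
          rw [show 1 + s + 1 = (s + 1) + 1 by ring, pow_succ]
          ring
      _ = 1 := by rw [h1, h2, one_mul]
  · simp

lemma aux_exp_mul (d : ℕ → ℚ)
    (hd : ∀ m, d m = (m ! : ℚ) * ∑ i ∈ Finset.range (m + 1), (-1 : ℚ) ^ i / (i ! : ℚ)) :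
    rescale (-1 : ℚ) (exp ℚ) * (PowerSeries.mk fun _ => (1 : ℚ)) = PowerSeries.mk (fun n => d n / (n ! : ℚ)) := by
  ext n
  rw [PowerSeries.coeff_mul, Finset.Nat.sum_antidiagonal_eq_sum_range_succ_mk]
  simp only [coeff_rescale, coeff_exp, coeff_mk]
  rw [hd n]
  have hn : (n ! : ℚ) ≠ 0 := by positivity
  field_simp
  simp [div_eq_mul_inv]

/-- The `s = r` case of the paper's recurrence (Equation (1.9)):
`d_{k,r} = ∑_{j=r}^{k} C(j-1,r-1) · k!/(k-j)! · d_{k-j}`, where `d_{k,r}` is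
defined by the EGF `t^r e^{-t}/(1-t)^{r+1}` and
`d_m = m!∑_{i=0}^m (-1)^i/i!` is the ordinary derangement number. -/
theorem stmt_13 (r : ℕ) (hr : 1 ≤ r) (D : ℕ → ℚ) (d : ℕ → ℚ)
    (hD : PowerSeries.mk (fun k => D k / (k ! : ℚ)) =
      X ^ r * rescale (-1 : ℚ) (exp ℚ) * ((1 - X) ^ (r + 1))⁻¹)
    (hd : ∀ m, d m = (m ! : ℚ) * ∑ i ∈ Finset.range (m + 1), (-1 : ℚ) ^ i / (i ! : ℚ)) :
    ∀ k, D k = ∑ j ∈ Finset.Icc r k,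
      ((j - 1).choose (r - 1) : ℚ) * (k.descFactorial j : ℚ) * d (k - j) := by
  intro k
  have hD' : PowerSeries.mk (fun k => D k / (k ! : ℚ)) =
      X ^ r * (PowerSeries.mk (fun n => d n / (n ! : ℚ)) *
        PowerSeries.mk (fun n => ((r - 1 + n).choose (r - 1) : ℚ))) := by
    rw [hD, aux_inv_split r hr, ← aux_exp_mul d hd]
    ring
  have hk := congrArg (PowerSeries.coeff k) hD'
  rw [coeff_mk, PowerSeries.coeff_X_pow_mul'] at hk
  have hkfac : (k ! : ℚ) ≠ 0 := by positivity
  by_cases hrk : r ≤ k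
  · rw [if_pos hrk, PowerSeries.coeff_mul,
      Finset.Nat.sum_antidiagonal_eq_sum_range_succ_mk] at hk
    simp only [coeff_mk] at hk
    have hDk : D k = (k ! : ℚ) * ∑ i ∈ Finset.range (k - r + 1),
        d i / (i ! : ℚ) * ((r - 1 + (k - r - i)).choose (r - 1) : ℚ) := by
      rw [← hk]; field_simp
    rw [hDk, Finset.mul_sum, ← Finset.sum_range_reflect]
    -- now reindex RHS goal sum over Icc r k via j = r + i
    rw [show Finset.Icc r k = Finset.map ⟨fun i => r + i, add_right_injective r⟩
        (Finset.range (k - r + 1)) from ?_]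
    · rw [Finset.sum_map]
      apply Finset.sum_congr rfl
      intro i hi
      simp only [Finset.mem_range] at hi
      have hik : i ≤ k - r := by omega
      simp only [Function.Embedding.coeFn_mk]
      have h1 : k - r + 1 - 1 - i = k - r - i := by omega
      have h2 : k - r - (k - r - i) = i := by omega
      have h3 : r + i - 1 = r - 1 + i := by omega
      have h4 : k - (r + i) = k - r - i := by omega
      rw [h1, h2, h3, h4]
      have hdf : (k.descFactorial (r + i) : ℚ) * ((k - r - i)! : ℚ) = (k ! : ℚ) := by
        have := Nat.factorial_mul_descFactorial (n := k) (k := r + i) (by omega)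
        rw [h4] at this
        exact_mod_cast by rw [mul_comm]; exact_mod_cast this
      have hf : ((k - r - i)! : ℚ) ≠ 0 := by positivity
      rw [← hdf]
      field_simp
    · ext j
      simp only [Finset.mem_Icc, Finset.mem_map, Finset.mem_range,
        Function.Embedding.coeFn_mk]
      constructor
      · rintro ⟨h1, h2⟩; exact ⟨j - r, by omega, by omega⟩
      · rintro ⟨i, hi, rfl⟩; omega
  · rw [if_neg hrk] at hk
    have : Finset.Icc r k = ∅ := by
      rw [Finset.Icc_eq_empty]; omega
    rw [this, Finset.sum_empty]
    have := hk
    field_simp at this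
    simpa using this
end
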